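/- arXiv:2110.12520 — 3 statements merged into one kernel-verified Lean document; each statement's English description precedes it below -/
import Mathlib

section
/- Let X and Y be real Hilbert spaces, A : X → Y a bounded linear operator with adjoint A*, and ψ : X → ℝ a convex function. Let x̃ ∈ X, y⁰ = A x̃, and suppose the source condition holds: there exists w ∈ Y with A* w ∈ ∂ψ(x̃), i.e., ψ(x) ≥ ψ(x̃) + ⟨A* w, x − x̃⟩ for all x ∈ X. Let δ ≥ 0, λ > 0, and let y^δ ∈ Y satisfy ‖y^δ − y⁰‖ ≤ δ. If x_λ ∈ X minimizes the functional F(x) = ½‖y^δ − A x‖² + λ ψ(x) over X, then the Bregman distance satisfies ψ(x_λ) − ψ(x̃) − ⟨A* w, x_λ − x̃⟩ ≤ λ‖w‖²/2 + δ²/(2λ). -/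
/-!
Minimality of `x_λ` for the convex functional `F` gives the optimality condition
`A* (y^δ - A x_λ) / λ ∈ ∂ψ(x_λ)`. Adding the two subgradient inequalities at `x_λ` and `x̃`
bounds `λ` times the Bregman distance by `⟪a, b - a⟫` with `a = y^δ - A x_λ - λ w` and
`b = y^δ - A x̃ - λ w`, and `⟪a, b - a⟫ ≤ ‖b‖² / 4 ≤ (δ + λ‖w‖)² / 4`.
-/

open RealInnerProductSpace Filter Topology

theorem le_of_forall_le_add_mul {a b c : ℝ} (h : ∀ t : ℝ, 0 < t → t ≤ 1 → a ≤ b + t * c) :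
    a ≤ b := by
  have hlim : Tendsto (fun t : ℝ => b + t * c) (𝓝[>] 0) (𝓝 b) := by
    have : Continuous fun t : ℝ => b + t * c := by fun_prop
    simpa using (this.tendsto 0).mono_left nhdsWithin_le_nhds
  refine ge_of_tendsto hlim ?_
  filter_upwards [Ioo_mem_nhdsGT one_pos] with t ht
  exact h t ht.1 ht.2.le

theorem real_inner_sub_le_norm_sq_div_four {E : Type*} [NormedAddCommGroup E]
    [InnerProductSpace ℝ E] (a b : E) : ⟪a, b - a⟫ ≤ ‖b‖ ^ 2 / 4 := by
  have hexp : ‖b - (2 : ℝ) • a‖ ^ 2 = ‖b‖ ^ 2 - 4 * ⟪a, b - a⟫ := by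
    rw [norm_sub_sq_real, norm_smul, inner_smul_right, real_inner_comm, inner_sub_right,
      real_inner_self_eq_norm_sq]
    norm_num
    ring
  nlinarith [sq_nonneg ‖b - (2 : ℝ) • a‖]

section Tikhonov

variable {X Y : Type*} [NormedAddCommGroup X] [InnerProductSpace ℝ X]
  [NormedAddCommGroup Y] [InnerProductSpace ℝ Y]

noncomputable def tikhonov (A : X →L[ℝ] Y) (ψ : X → ℝ) (lam : ℝ) (y : Y) (x : X) : ℝ :=
  (1 / 2) * ‖y - A x‖ ^ 2 + lam * ψ x

-- Compare `F(x_λ)` with `F` at the point `(1 - t) x_λ + t x`, which convexity of `ψ` controls.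
theorem mul_sub_le_inner_add_of_tikhonov_min {A : X →L[ℝ] Y} {ψ : X → ℝ}
    (hψ : ConvexOn ℝ Set.univ ψ) {lam : ℝ} (hlam : 0 ≤ lam) {y : Y} {xl : X}
    (hmin : ∀ x, tikhonov A ψ lam y xl ≤ tikhonov A ψ lam y x) (x : X) {t : ℝ}
    (ht : 0 < t) (ht1 : t ≤ 1) :
    lam * (ψ xl - ψ x) ≤ ⟪y - A xl, A (xl - x)⟫ + t * (‖A (x - xl)‖ ^ 2 / 2) := by
  set s := y - A xl
  set d := A (x - xl)
  have hconv : lam * ψ ((1 - t) • xl + t • x) ≤ lam * ((1 - t) * ψ xl + t * ψ x) :=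
    mul_le_mul_of_nonneg_left
      (hψ.2 (Set.mem_univ xl) (Set.mem_univ x) (by linarith) ht.le (by ring)) hlam
  have hres : y - A ((1 - t) • xl + t • x) = s - t • d := by
    simp only [s, d, map_add, map_sub, map_smul]
    module
  have hnorm : ‖s - t • d‖ ^ 2 = ‖s‖ ^ 2 - 2 * t * ⟪s, d⟫ + t ^ 2 * ‖d‖ ^ 2 := by
    rw [norm_sub_sq_real, real_inner_smul_right, norm_smul, Real.norm_of_nonneg ht.le]
    ring
  have hd : ⟪s, A (xl - x)⟫ = -⟪s, d⟫ := by
    rw [← inner_neg_right, ← map_neg, neg_sub]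
  have hcmp := hmin ((1 - t) • xl + t • x)
  simp only [tikhonov, hres, hnorm] at hcmp
  rw [hd]
  refine le_of_mul_le_mul_left ?_ ht
  nlinarith

theorem mul_sub_le_inner_of_tikhonov_min {A : X →L[ℝ] Y} {ψ : X → ℝ}
    (hψ : ConvexOn ℝ Set.univ ψ) {lam : ℝ} (hlam : 0 ≤ lam) {y : Y} {xl : X}
    (hmin : ∀ x, tikhonov A ψ lam y xl ≤ tikhonov A ψ lam y x) (x : X) :
    lam * (ψ xl - ψ x) ≤ ⟪y - A xl, A (xl - x)⟫ :=
  le_of_forall_le_add_mul fun _ ht ht1 =>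
    mul_sub_le_inner_add_of_tikhonov_min hψ hlam hmin x ht ht1

end Tikhonov

theorem bregman_rate_general
    {X Y : Type*} [NormedAddCommGroup X] [InnerProductSpace ℝ X] [CompleteSpace X]
    [NormedAddCommGroup Y] [InnerProductSpace ℝ Y] [CompleteSpace Y]
    (A : X →L[ℝ] Y) (ψ : X → ℝ) (hψ : ConvexOn ℝ Set.univ ψ)
    (xt : X) (w : Y)
    (hSC : ∀ x : X, ψ x ≥ ψ xt + ⟪(ContinuousLinearMap.adjoint A) w, x - xt⟫)
    (δ : ℝ) (lam : ℝ) (hlam : 0 < lam)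
    (yδ : Y) (hnoise : ‖yδ - A xt‖ ≤ δ)
    (xl : X)
    (hmin : ∀ x : X,
      (1 / 2) * ‖yδ - A xl‖ ^ 2 + lam * ψ xl ≤ (1 / 2) * ‖yδ - A x‖ ^ 2 + lam * ψ x) :
    ψ xl - ψ xt - ⟪(ContinuousLinearMap.adjoint A) w, xl - xt⟫ ≤
      lam * ‖w‖ ^ 2 / 2 + δ ^ 2 / (2 * lam) := by
  rw [ContinuousLinearMap.adjoint_inner_left]
  have hopt := mul_sub_le_inner_of_tikhonov_min hψ hlam.le hmin xt
  have hsrc := hSC xl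
  rw [ContinuousLinearMap.adjoint_inner_left] at hsrc
  set a := yδ - A xl - lam • w
  set b := yδ - A xt - lam • w
  have hab : A (xl - xt) = b - a := by
    simp only [a, b, map_sub]
    abel
  have hbregman : lam * (ψ xl - ψ xt - ⟪w, A (xl - xt)⟫) ≤ ⟪a, b - a⟫ := by
    rw [← hab, inner_sub_left, real_inner_smul_left]
    nlinarith
  have hb : ‖b‖ ≤ δ + lam * ‖w‖ := by
    calc ‖b‖ ≤ ‖yδ - A xt‖ + ‖lam • w‖ := norm_sub_le _ _
      _ ≤ δ + lam * ‖w‖ := by rw [norm_smul, Real.norm_of_nonneg hlam.le]; linarith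
  have hquad := real_inner_sub_le_norm_sq_div_four a b
  rw [div_add_div _ _ two_ne_zero (by positivity), le_div_iff₀ (by positivity)]
  nlinarith [sq_nonneg (δ - lam * ‖w‖), norm_nonneg b, norm_nonneg w]

/-- Convergence rate under the variational source condition:
if `A* w ∈ ∂ψ(x̃)` and `x_λ` minimizes `½‖y^δ − A x‖² + λ ψ(x)` with `‖y^δ − A x̃‖ ≤ δ`,
then the Bregman distance satisfies
`ψ(x_λ) − ψ(x̃) − ⟨A* w, x_λ − x̃⟩ ≤ λ‖w‖²/2 + δ²/(2λ)`. -/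
theorem bregman_rate
    {X Y : Type*} [NormedAddCommGroup X] [InnerProductSpace ℝ X] [CompleteSpace X]
    [NormedAddCommGroup Y] [InnerProductSpace ℝ Y] [CompleteSpace Y]
    (A : X →L[ℝ] Y) (ψ : X → ℝ) (hψ : ConvexOn ℝ Set.univ ψ)
    (xt : X) (w : Y)
    (hSC : ∀ x : X, ψ x ≥ ψ xt + ⟪(ContinuousLinearMap.adjoint A) w, x - xt⟫)
    (δ : ℝ) (hδ : 0 ≤ δ) (lam : ℝ) (hlam : 0 < lam)
    (yδ : Y) (hnoise : ‖yδ - A xt‖ ≤ δ)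
    (xl : X)
    (hmin : ∀ x : X,
      (1 / 2) * ‖yδ - A xl‖ ^ 2 + lam * ψ xl ≤ (1 / 2) * ‖yδ - A x‖ ^ 2 + lam * ψ x) :
    ψ xl - ψ xt - ⟪(ContinuousLinearMap.adjoint A) w, xl - xt⟫ ≤
      lam * ‖w‖ ^ 2 / 2 + δ ^ 2 / (2 * lam) :=
  bregman_rate_general A ψ hψ xt w hSC δ lam hlam yδ hnoise xl hmin
end

section
/- Let X and Y be real Hilbert spaces, A : X → Y a bounded linear operator with adjoint A*, and ψ : X → ℝ a convex function. Let x̃ ∈ X, y⁰ = A x̃, and suppose A* w ∈ ∂ψ(x̃) for some w ∈ Y. Let δ > 0 and y^δ ∈ Y with ‖y^δ − y⁰‖ ≤ δ. If x_δ minimizes F(x) = ½‖y^δ − A x‖² + δ ψ(x) over X (i.e., the parameter choice λ = δ), then ψ(x_δ) − ψ(x̃) − ⟨A* w, x_δ − x̃⟩ ≤ δ(‖w‖² + 1)/2; in particular the Bregman distance converges to 0 at rate O(δ) as δ → 0. -/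
/-!
Minimality of `xδ` together with convexity of `ψ` gives the variational inequality
`δ (ψ xδ - ψ x̃) ≤ ⟪r, A (xδ - x̃)⟫` for the residual `r = yδ - A xδ` (compare `xδ` with points of
the segment towards `x̃` and let the step length tend to `0`). Subtracting `δ ⟪w, A (xδ - x̃)⟫`,
and writing `A (xδ - x̃) = e - r` with `e = yδ - A x̃`, the scaled Bregman distance is bounded by
`⟪u, v - u⟫` with `u = r - δ w`, `v = e - δ w`, hence by `‖v‖² / 4 ≤ δ² (‖w‖² + 1) / 2`.
-/

open RealInnerProductSpace Filter Topology

theorem real_inner_sub_self_le {F : Type*} [NormedAddCommGroup F] [InnerProductSpace ℝ F]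
    (u v : F) : ⟪u, v - u⟫ ≤ ‖v‖ ^ 2 / 4 := by
  have h := norm_sub_sq_real v ((2 : ℝ) • u)
  rw [inner_sub_right, real_inner_self_eq_norm_sq]
  rw [real_inner_smul_right, norm_smul, Real.norm_two, real_inner_comm] at h
  nlinarith [sq_nonneg ‖v - (2 : ℝ) • u‖]

section VariationalInequality

variable {X Y : Type*} [AddCommGroup X] [Module ℝ X]
  [NormedAddCommGroup Y] [InnerProductSpace ℝ Y]

theorem ConvexOn.sub_le_inner_residual_of_minimizes {φ : X → ℝ} (hφ : ConvexOn ℝ Set.univ φ)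
    {A : X →ₗ[ℝ] Y} {y : Y} {x₀ : X}
    (hmin : ∀ x, (1 / 2) * ‖y - A x₀‖ ^ 2 + φ x₀ ≤ (1 / 2) * ‖y - A x‖ ^ 2 + φ x) (x : X) :
    φ x₀ - φ x ≤ ⟪y - A x₀, A (x₀ - x)⟫ := by
  set r := y - A x₀
  set d := A (x - x₀)
  refine le_of_forall_le_add_mul (c := ‖d‖ ^ 2 / 2) fun t ht ht1 => ?_
  have hconv : φ (x₀ + t • (x - x₀)) ≤ (1 - t) * φ x₀ + t * φ x := by
    have h := hφ.2 (Set.mem_univ x₀) (Set.mem_univ x) (sub_nonneg.2 ht1) ht.le (by ring)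
    rwa [show (1 - t) • x₀ + t • x = x₀ + t • (x - x₀) by module] at h
  have hres : y - A (x₀ + t • (x - x₀)) = r - t • d := by
    simp only [r, d, map_add, map_smul]; abel
  have hexp : ‖r - t • d‖ ^ 2 = ‖r‖ ^ 2 - 2 * t * ⟪r, d⟫ + t ^ 2 * ‖d‖ ^ 2 := by
    rw [norm_sub_sq_real, real_inner_smul_right, norm_smul, Real.norm_of_nonneg ht.le]; ring
  have hsign : ⟪r, A (x₀ - x)⟫ = -⟪r, d⟫ := by
    rw [← inner_neg_right, ← map_neg, neg_sub]
  have h := hmin (x₀ + t • (x - x₀))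
  rw [hres, hexp] at h
  rw [hsign]
  have ht' : t * (φ x₀ - φ x) ≤ t * (-⟪r, d⟫ + t * (‖d‖ ^ 2 / 2)) := by nlinarith
  exact le_of_mul_le_mul_left ht' ht

end VariationalInequality

theorem bregman_rate_lambda_eq_delta_general
    {X Y : Type*} [NormedAddCommGroup X] [InnerProductSpace ℝ X] [CompleteSpace X]
    [NormedAddCommGroup Y] [InnerProductSpace ℝ Y] [CompleteSpace Y]
    (A : X →L[ℝ] Y) (ψ : X → ℝ) (hψ : ConvexOn ℝ Set.univ ψ)
    (xt : X) (w : Y)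
    (δ : ℝ) (hδ : 0 < δ)
    (yδ : Y) (hnoise : ‖yδ - A xt‖ ≤ δ)
    (xδ : X)
    (hmin : ∀ x : X,
      (1 / 2) * ‖yδ - A xδ‖ ^ 2 + δ * ψ xδ ≤ (1 / 2) * ‖yδ - A x‖ ^ 2 + δ * ψ x) :
    ψ xδ - ψ xt - ⟪(ContinuousLinearMap.adjoint A) w, xδ - xt⟫ ≤ δ * (‖w‖ ^ 2 + 1) / 2 := by
  set r := yδ - A xδ
  set e := yδ - A xt
  have hvar : δ * ψ xδ - δ * ψ xt ≤ ⟪r, A (xδ - xt)⟫ :=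
    (hψ.smul hδ.le).sub_le_inner_residual_of_minimizes (A := (A : X →ₗ[ℝ] Y)) hmin xt
  have hdiff : A (xδ - xt) = (e - δ • w) - (r - δ • w) := by
    simp only [r, e, map_sub]; abel
  have hscaled : δ * (ψ xδ - ψ xt - ⟪w, A (xδ - xt)⟫) ≤ ‖e - δ • w‖ ^ 2 / 4 := by
    calc δ * (ψ xδ - ψ xt - ⟪w, A (xδ - xt)⟫)
        ≤ ⟪r - δ • w, A (xδ - xt)⟫ := by
          rw [inner_sub_left, real_inner_smul_left]; linarith
      _ ≤ ‖e - δ • w‖ ^ 2 / 4 := hdiff ▸ real_inner_sub_self_le _ _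
  have hdata : ‖e - δ • w‖ ^ 2 ≤ 2 * δ ^ 2 * (‖w‖ ^ 2 + 1) := by
    have h := norm_sub_le e (δ • w)
    rw [norm_smul, Real.norm_of_nonneg hδ.le] at h
    nlinarith [norm_nonneg (e - δ • w), two_mul_le_add_sq ‖e‖ (δ * ‖w‖), norm_nonneg e]
  rw [ContinuousLinearMap.adjoint_inner_left]
  nlinarith

/-- A priori parameter choice `λ = δ`: the Bregman distance is bounded by
`δ(‖w‖² + 1)/2`, hence converges to `0` at rate `O(δ)`. -/
theorem bregman_rate_lambda_eq_delta
    {X Y : Type*} [NormedAddCommGroup X] [InnerProductSpace ℝ X] [CompleteSpace X]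
    [NormedAddCommGroup Y] [InnerProductSpace ℝ Y] [CompleteSpace Y]
    (A : X →L[ℝ] Y) (ψ : X → ℝ) (hψ : ConvexOn ℝ Set.univ ψ)
    (xt : X) (w : Y)
    (hSC : ∀ x : X, ψ x ≥ ψ xt + ⟪(ContinuousLinearMap.adjoint A) w, x - xt⟫)
    (δ : ℝ) (hδ : 0 < δ)
    (yδ : Y) (hnoise : ‖yδ - A xt‖ ≤ δ)
    (xδ : X)
    (hmin : ∀ x : X,
      (1 / 2) * ‖yδ - A xδ‖ ^ 2 + δ * ψ xδ ≤ (1 / 2) * ‖yδ - A x‖ ^ 2 + δ * ψ x) :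
    ψ xδ - ψ xt - ⟪(ContinuousLinearMap.adjoint A) w, xδ - xt⟫ ≤ δ * (‖w‖ ^ 2 + 1) / 2 :=
  bregman_rate_lambda_eq_delta_general A ψ hψ xt w δ hδ yδ hnoise xδ hmin
end

section
/- Let X and Y be real Hilbert spaces, A : X → Y a bounded linear operator with adjoint A*, and ψ : X → ℝ a convex function. Let x̃ ∈ X and suppose A* w ∈ ∂ψ(x̃) for some w ∈ Y. Let λ > 0 and suppose x_λ minimizes the noise-free functional F(x) = ½‖A x̃ − A x‖² + λ ψ(x) over X (i.e., the data is the exact measurement y⁰ = A x̃). Then the Bregman distance satisfies ψ(x_λ) − ψ(x̃) − ⟨A* w, x_λ − x̃⟩ ≤ λ‖w‖²/2. -/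
/-!
Comparing the minimizer `x_λ` with `x̃` itself gives `½‖r‖² + λ ψ(x_λ) ≤ λ ψ(x̃)` for the
residual `r = A x_λ − A x̃`, and the adjoint turns `⟨A* w, x_λ − x̃⟩` into `⟨w, r⟩`.
Young's inequality `−λ⟨w, r⟩ ≤ ½‖r‖² + ½λ²‖w‖²` then absorbs the residual term.
-/

open RealInnerProductSpace

section

variable {E : Type*} [NormedAddCommGroup E] [InnerProductSpace ℝ E]

theorem neg_mul_inner_le_half_norm_sq_add (lam : ℝ) (w r : E) :
    -(lam * ⟪w, r⟫) ≤ ‖r‖ ^ 2 / 2 + lam ^ 2 * ‖w‖ ^ 2 / 2 := by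
  have hexpand : ‖r + lam • w‖ ^ 2 = ‖r‖ ^ 2 + 2 * (lam * ⟪w, r⟫) + lam ^ 2 * ‖w‖ ^ 2 := by
    rw [norm_add_sq_real, real_inner_smul_right, real_inner_comm, norm_smul,
      Real.norm_eq_abs, mul_pow, sq_abs]
  nlinarith [sq_nonneg ‖r + lam • w‖]

theorem sub_sub_inner_le_of_half_norm_sq_add_le {a b lam : ℝ} (hlam : 0 < lam) {w r : E}
    (h : ‖r‖ ^ 2 / 2 + lam * a ≤ lam * b) :
    a - b - ⟪w, r⟫ ≤ lam * ‖w‖ ^ 2 / 2 := by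
  have hyoung := neg_mul_inner_le_half_norm_sq_add lam w r
  have hscaled : lam * (a - b - ⟪w, r⟫) ≤ lam * (lam * ‖w‖ ^ 2 / 2) := by linarith
  exact le_of_mul_le_mul_left hscaled hlam

end

theorem bregman_rate_noise_free_general
    {X Y : Type*} [NormedAddCommGroup X] [InnerProductSpace ℝ X] [CompleteSpace X]
    [NormedAddCommGroup Y] [InnerProductSpace ℝ Y] [CompleteSpace Y]
    (A : X →L[ℝ] Y) (ψ : X → ℝ)
    (xt : X) (w : Y)
    (lam : ℝ) (hlam : 0 < lam)
    (xl : X)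
    (hmin : ∀ x : X,
      (1 / 2) * ‖A xt - A xl‖ ^ 2 + lam * ψ xl ≤ (1 / 2) * ‖A xt - A x‖ ^ 2 + lam * ψ x) :
    ψ xl - ψ xt - ⟪(ContinuousLinearMap.adjoint A) w, xl - xt⟫ ≤ lam * ‖w‖ ^ 2 / 2 := by
  have hcompare := hmin xt
  rw [sub_self, norm_zero, norm_sub_rev] at hcompare
  rw [ContinuousLinearMap.adjoint_inner_left, map_sub]
  exact sub_sub_inner_le_of_half_norm_sq_add_le hlam (by linarith)

/-- Noise-free case: if `x_λ` minimizes `½‖A x̃ − A x‖² + λ ψ(x)` then the Bregman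
distance satisfies `ψ(x_λ) − ψ(x̃) − ⟨A* w, x_λ − x̃⟩ ≤ λ‖w‖²/2`. -/
theorem bregman_rate_noise_free
    {X Y : Type*} [NormedAddCommGroup X] [InnerProductSpace ℝ X] [CompleteSpace X]
    [NormedAddCommGroup Y] [InnerProductSpace ℝ Y] [CompleteSpace Y]
    (A : X →L[ℝ] Y) (ψ : X → ℝ) (hψ : ConvexOn ℝ Set.univ ψ)
    (xt : X) (w : Y)
    (hSC : ∀ x : X, ψ x ≥ ψ xt + ⟪(ContinuousLinearMap.adjoint A) w, x - xt⟫)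
    (lam : ℝ) (hlam : 0 < lam)
    (xl : X)
    (hmin : ∀ x : X,
      (1 / 2) * ‖A xt - A xl‖ ^ 2 + lam * ψ xl ≤ (1 / 2) * ‖A xt - A x‖ ^ 2 + lam * ψ x) :
    ψ xl - ψ xt - ⟪(ContinuousLinearMap.adjoint A) w, xl - xt⟫ ≤ lam * ‖w‖ ^ 2 / 2 :=
  bregman_rate_noise_free_general A ψ xt w lam hlam xl hmin
end
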